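/- Let X be a topological space, x ∈ X, and let H ≤ K be subgroups of π₁(X, x). If π_H^qs(X, x) = H, then π_K^qs(X, x) = K. -/

import Mathlib

open unitInterval

noncomputable section

attribute [local instance] Path.Homotopic.setoid

variable {X Y : Type*} [TopologicalSpace X] [TopologicalSpace Y]

/-- `HClose f g` : the path `f` is homotopically close to the path `g` rel `∂I`:
for every partition `0 = t₀ < t₁ < ⋯ < tₙ = 1` and every sequence of open sets
`U₁, …, Uₙ` with `g [tᵢ₋₁, tᵢ] ⊆ Uᵢ`, there is a path `γ`, homotopic to `f` rel `∂I`,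
with `γ [tᵢ₋₁, tᵢ] ⊆ Uᵢ` and `γ tᵢ = g tᵢ` for all `i`. -/
def HClose {a b : X} (f g : Path a b) : Prop :=
  ∀ (n : ℕ) (t : Fin (n + 1) → I), t 0 = 0 → t (Fin.last n) = 1 → StrictMono t →
    ∀ U : Fin n → Set X, (∀ i, IsOpen (U i)) →
      (∀ i : Fin n, g '' Set.Icc (t i.castSucc) (t i.succ) ⊆ U i) →
      ∃ γ : Path a b,
        (∀ i : Fin n, γ '' Set.Icc (t i.castSucc) (t i.succ) ⊆ U i) ∧
        (∀ i : Fin (n + 1), γ (t i) = g (t i)) ∧ γ.Homotopic f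

/-- The class of a loop at `x` as an element of the fundamental group. -/
def pathClass {x : X} (f : Path x x) : FundamentalGroup X x :=
  FundamentalGroup.fromPath ⟦f⟧

/-- The `H`-quasi-small loop set `π_H^qs(X, x)`. -/
def qsSet (x : X) (H : Set (FundamentalGroup X x)) : Set (FundamentalGroup X x) :=
  { p | ∃ f h : Path x x, pathClass f = p ∧ pathClass h ∈ H ∧ HClose f h }

/-- The quasi-small loop group `π₁^qs(X, x)`. -/
def qs (x : X) : Set (FundamentalGroup X x) :=
  qsSet x (⊥ : Subgroup (FundamentalGroup X x))

/-- The Spanier group of `(X, x)` with respect to the cover `𝒰`. -/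
def spanierCover (x : X) (𝒰 : Set (Set X)) : Subgroup (FundamentalGroup X x) :=
  Subgroup.closure { p | ∃ (y : X) (u : Path x y) (v : Path y y) (U : Set X),
    U ∈ 𝒰 ∧ Set.range v ⊆ U ∧ p = pathClass ((u.trans v).trans u.symm) }

/-- The (unbased) Spanier group `π₁^sp(X, x)`. -/
def spanierGroup (x : X) : Subgroup (FundamentalGroup X x) :=
  ⨅ (𝒰 : Set (Set X)) (_ : ∀ U ∈ 𝒰, IsOpen U) (_ : ⋃₀ 𝒰 = Set.univ), spanierCover x 𝒰

/-- The small generated subgroup `π₁^sg(X, x)`. -/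
def smallGenerated (x : X) : Subgroup (FundamentalGroup X x) :=
  Subgroup.closure { p | ∃ (y : X) (β : Path x y) (α : Path y y),
    HClose α (Path.refl y) ∧ p = pathClass ((β.trans α).trans β.symm) }

/-- `X` is homotopically path Hausdorff relative to `H ⊆ π₁(X, x)`. -/
def HPHausdorffRel (x : X) (H : Set (FundamentalGroup X x)) : Prop :=
  ∀ (y : X) (α β : Path x y), pathClass (α.trans β.symm) ∉ H →
    ∃ (n : ℕ) (t : Fin (n + 1) → I), t 0 = 0 ∧ t (Fin.last n) = 1 ∧ StrictMono t ∧
      ∃ U : Fin n → Set X, (∀ i, IsOpen (U i)) ∧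
        (∀ i : Fin n, α '' Set.Icc (t i.castSucc) (t i.succ) ⊆ U i) ∧
        ∀ γ : Path x y, (∀ i : Fin n, γ '' Set.Icc (t i.castSucc) (t i.succ) ⊆ U i) →
          (∀ i : Fin (n + 1), γ (t i) = α (t i)) → pathClass (γ.trans β.symm) ∉ H

/-!
If `f` is homotopically close to `g`, then `f · g⁻¹` is homotopically close to the null loop
`g · g⁻¹`, whose class lies in `H`; so `[g]⁻¹[f] ∈ π_H^qs = H ≤ K` and `[f] ∈ K`.
Closeness survives appending a path `c` on the right: a partition `(tᵢ)` for `g · c` is pulled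
back to the partition of `g` by the points `2tᵢ` with `tᵢ < 1/2`, followed by `1`, and on
`[1/2, 1]` any `γ · c` already agrees with `g · c`.
-/

open Set

theorem Monotone.exists_lt_iff_lt_of_le {ι α : Type*} [LinearOrder ι] [WellFoundedLT ι]
    [LinearOrder α] {f : ι → α} (hf : Monotone f) {c : α} {i : ι} (hi : c ≤ f i) :
    ∃ m, ∀ k, f k < c ↔ k < m := by
  obtain ⟨m, hm, hmin⟩ := wellFounded_lt.has_min {k | c ≤ f k} ⟨i, hi⟩
  refine ⟨m, fun k => ⟨fun hk => lt_of_not_ge fun hmk => ?_, fun hkm => ?_⟩⟩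
  · exact hk.not_ge (hm.trans (hf hmk))
  · exact lt_of_not_ge fun hck => hmin k hck hkm

def clampDouble (u : I) : I :=
  projIcc 0 1 zero_le_one (2 * u)

theorem coe_clampDouble (u : I) : (clampDouble u : ℝ) = max 0 (min 1 (2 * (u : ℝ))) := rfl

theorem clampDouble_zero : clampDouble 0 = 0 := by
  simp [clampDouble]

theorem clampDouble_of_half_le {u : I} (hu : 1 / 2 ≤ (u : ℝ)) : clampDouble u = 1 :=
  projIcc_of_right_le _ (by linarith)

theorem monotone_clampDouble : Monotone clampDouble := fun _ _ huw =>
  monotone_projIcc _ (by simpa using huw)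

theorem clampDouble_lt_clampDouble {u w : I} (hu : (u : ℝ) < 1 / 2) (huw : u < w) :
    clampDouble u < clampDouble w := by
  rw [← Subtype.coe_lt_coe, coe_clampDouble, coe_clampDouble]
  have huw' : (u : ℝ) < w := huw
  have hu₀ : (0 : ℝ) ≤ u := u.2.1
  rw [min_eq_right (by linarith : (2 : ℝ) * u ≤ 1), max_eq_right (by linarith)]
  exact lt_max_of_lt_right (lt_min (by linarith) (by linarith))

namespace Path

variable {a b d : X}

theorem trans_apply_of_le_half (γ : Path a b) (γ' : Path b d) {u : I} (hu : (u : ℝ) ≤ 1 / 2) :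
    γ.trans γ' u = γ (clampDouble u) := by
  show ite _ _ _ = _
  rw [if_pos hu]
  rfl

theorem trans_apply_eq_of_half_le (γ₁ γ₂ : Path a b) (γ' : Path b d) {u : I}
    (hu : 1 / 2 ≤ (u : ℝ)) : γ₁.trans γ' u = γ₂.trans γ' u := by
  rw [← extend_extends', ← extend_extends', extend_trans_of_half_le _ _ hu,
    extend_trans_of_half_le _ _ hu]

theorem image_Icc_clampDouble_subset_image_trans (γ : Path a b) (γ' : Path b d) {u w : I}
    (hu : (u : ℝ) ≤ 1 / 2) :
    γ '' Icc (clampDouble u) (clampDouble w) ⊆ γ.trans γ' '' Icc u w := by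
  rintro _ ⟨v, ⟨hv₁, hv₂⟩, rfl⟩
  have hu₀ : (0 : ℝ) ≤ u := u.2.1
  have hw₀ : (0 : ℝ) ≤ w := w.2.1
  have hv₀ : (0 : ℝ) ≤ v := v.2.1
  have hv_le_one : (v : ℝ) ≤ 1 := v.2.2
  rw [← Subtype.coe_le_coe, coe_clampDouble] at hv₁ hv₂
  rw [min_eq_right (by linarith : (2 : ℝ) * u ≤ 1), max_eq_right (by linarith)] at hv₁
  have hv₂' : (v : ℝ) ≤ 2 * w := hv₂.trans (max_le (by linarith) (min_le_right _ _))
  let v' : I := ⟨v / 2, by linarith, by linarith⟩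
  refine ⟨v', ⟨?_, ?_⟩, ?_⟩
  · show (u : ℝ) ≤ v / 2; linarith
  · show (v : ℝ) / 2 ≤ w; linarith
  · rw [trans_apply_of_le_half _ _ (show (v : ℝ) / 2 ≤ 1 / 2 by linarith)]
    congr 1
    apply Subtype.ext
    rw [coe_clampDouble]
    show max 0 (min 1 (2 * ((v : ℝ) / 2))) = v
    rw [mul_div_cancel₀ _ two_ne_zero, min_eq_right hv_le_one, max_eq_right hv₀]

end Path

theorem HClose.refl {a b : X} (f : Path a b) : HClose f f :=
  fun _ _ _ _ _ _ _ hfU => ⟨f, hfU, fun _ => rfl, Path.Homotopic.refl f⟩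

theorem HClose.trans_right {a b d : X} {f g : Path a b} (hfg : HClose f g) (c : Path b d) :
    HClose (f.trans c) (g.trans c) := by
  intro n t ht₀ htₙ hmono U hU hgU
  obtain ⟨m, hm⟩ : ∃ m : Fin (n + 1), ∀ k, (t k : ℝ) < 1 / 2 ↔ k < m :=
    ((Subtype.mono_coe _).comp hmono.monotone).exists_lt_iff_lt_of_le (i := Fin.last n)
      (by norm_num [htₙ])
  have hmn : (m : ℕ) ≤ n := Nat.lt_succ_iff.mp m.isLt
  let s (j : Fin (m + 1)) : I := clampDouble (t (Fin.castLE (Nat.succ_le_succ hmn) j))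
  have hs₀ : s 0 = 0 := by simp [s, ht₀, clampDouble_zero]
  have hsₘ : s (Fin.last m) = 1 :=
    clampDouble_of_half_le (not_lt.1 fun h => lt_irrefl m ((hm m).1 h))
  have hs : StrictMono s := fun j l hjl =>
    clampDouble_lt_clampDouble ((hm _).2 (Fin.lt_def.2 (lt_of_lt_of_le hjl l.is_le)))
      (hmono hjl)
  have hgs (j : Fin m) : g '' Icc (s j.castSucc) (s j.succ) ⊆ U (Fin.castLE hmn j) :=
    (Path.image_Icc_clampDouble_subset_image_trans g c ((hm _).2 j.isLt).le).trans
      (hgU (Fin.castLE hmn j))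
  obtain ⟨γ, hγU, hγs, hγf⟩ := hfg m s hs₀ hsₘ hs _ (fun _ => hU _) hgs
  refine ⟨γ.trans c, fun i => ?_, fun k => ?_, hγf.hcomp (.refl c)⟩
  · rintro _ ⟨u, hu, rfl⟩
    rcases le_or_gt (1 / 2 : ℝ) u with hu₂ | hu₂
    · rw [Path.trans_apply_eq_of_half_le γ g c hu₂]
      exact hgU i ⟨u, hu, rfl⟩
    · have hi : (i : ℕ) < m := (hm i.castSucc).1 (lt_of_le_of_lt hu.1 hu₂)
      rw [Path.trans_apply_of_le_half _ _ hu₂.le]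
      exact hγU ⟨i, hi⟩
        ⟨clampDouble u, ⟨monotone_clampDouble hu.1, monotone_clampDouble hu.2⟩, rfl⟩
  · rcases le_or_gt (1 / 2 : ℝ) (t k) with hk | hk
    · exact Path.trans_apply_eq_of_half_le γ g c hk
    · rw [Path.trans_apply_of_le_half _ _ hk.le, Path.trans_apply_of_le_half _ _ hk.le]
      exact hγs ⟨k, Nat.lt_succ_of_lt ((hm k).1 hk)⟩

theorem subset_qsSet (x : X) (S : Set (FundamentalGroup X x)) : S ⊆ qsSet x S := by
  intro p hp
  obtain ⟨f, rfl⟩ := Quotient.exists_rep (FundamentalGroup.toPath p)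
  exact ⟨f, f, rfl, hp, HClose.refl f⟩

theorem HClose.inv_mul_mem_qsSet {x : X} {f g : Path x x} (hfg : HClose f g)
    {S : Set (FundamentalGroup X x)} (hS : 1 ∈ S) : (pathClass g)⁻¹ * pathClass f ∈ qsSet x S :=
  ⟨f.trans g.symm, g.trans g.symm, rfl, by
    rwa [show pathClass (g.trans g.symm) = (pathClass g)⁻¹ * pathClass g from rfl,
      inv_mul_cancel],
    hfg.trans_right g.symm⟩

/-- for subgroups `H ≤ K` of `π₁(X, x)`, if `π_H^qs(X, x) = H`, then
`π_K^qs(X, x) = K`. -/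
theorem stmt9 (x : X) (H K : Subgroup (FundamentalGroup X x)) (hHK : H ≤ K)
    (h : qsSet x ↑H = (H : Set (FundamentalGroup X x))) :
    qsSet x ↑K = (K : Set (FundamentalGroup X x)) := by
  refine (subset_qsSet x K).antisymm' ?_
  rintro _ ⟨f, g, rfl, hg, hfg⟩
  have hgf : (pathClass g)⁻¹ * pathClass f ∈ H := h.subset (hfg.inv_mul_mem_qsSet H.one_mem)
  simpa only [mul_inv_cancel_left, SetLike.mem_coe] using K.mul_mem hg (hHK hgf)
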